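/- arXiv:2209.09716 — 5 statements merged into one kernel-verified Lean document; each statement's English description precedes it below -/
import Mathlib

section
/- Let ℙ, ℚ be shift-invariant probability measures on 𝒜^ℕ such that ℚ satisfies the upper-decoupling inequality ℚ_{n+m}(ab) ≤ C ℚₙ(a) ℚₘ(b) for some constant C ≥ 1 and all words a ∈ 𝒜ⁿ, b ∈ 𝒜ᵐ. Then the cross entropy s^cross(ℙ|ℚ) := lim_{n→∞} −(1/n) ∑_{a∈𝒜ⁿ} ℙₙ(a) log ℚₙ(a) exists in (−∞, +∞] (the sequence either converges or properly diverges to +∞). -/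
open MeasureTheory Filter Finset
open scoped Topology

variable {𝒜 : Type*}

/-- The left shift on one-sided sequences. -/
def shift : (ℕ → 𝒜) → (ℕ → 𝒜) := fun x n => x (n + 1)

/-- The `n`-prefix of a sequence (0-indexed). -/
def pref (n : ℕ) (x : ℕ → 𝒜) : Fin n → 𝒜 := fun i => x i.val

/-- The cylinder determined by a word. -/
def cyl {n : ℕ} (a : Fin n → 𝒜) : Set (ℕ → 𝒜) := {x | pref n x = a}

/-- The `n`-th marginal of a measure, as a real-valued function on words. -/
noncomputable def marg [MeasurableSpace 𝒜] (P : Measure (ℕ → 𝒜)) (n : ℕ)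
    (a : Fin n → 𝒜) : ℝ := (P (cyl a)).toReal

/-- The reversal of a word with respect to an involution `θ`. -/
def wordRev (θ : 𝒜 → 𝒜) {n : ℕ} (a : Fin n → 𝒜) : Fin n → 𝒜 := fun i => θ (a i.rev)

/-- Shift invariance of a measure. -/
def ShiftInv [MeasurableSpace 𝒜] (P : Measure (ℕ → 𝒜)) : Prop :=
  ∀ s : Set (ℕ → 𝒜), P (shift ⁻¹' s) = P s

open scoped ENNReal

/-- `cₙ = −∑_{a∈𝒜ⁿ} ℙₙ(a) log ℚₙ(a) ∈ [0,+∞]`, with the conventions `0·log 0 = 0` and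
`log 0 = −∞` (so `cₙ = +∞` if `ℙₙ` is not absolutely continuous w.r.t. `ℚₙ`). -/
noncomputable def crossTerm [Fintype 𝒜] [MeasurableSpace 𝒜]
    (P Q : Measure (ℕ → 𝒜)) (n : ℕ) : ℝ≥0∞ :=
  ∑ a : Fin n → 𝒜,
    if marg P n a = 0 then 0
    else ENNReal.ofReal (marg P n a) *
      (if marg Q n a = 0 then ⊤ else ENNReal.ofReal (-Real.log (marg Q n a)))

set_option linter.unusedSectionVars false

/-- Fekete-type: if `u ≥ 0` is superadditive up to a constant `L ≥ 0`, then
`ofReal (u n) / n` converges in `ℝ≥0∞`. -/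
lemma fekete_ennreal (u : ℕ → ℝ) (hu0 : ∀ n, 0 ≤ u n) {L : ℝ} (hL : 0 ≤ L)
    (hsuper : ∀ n m, u n + u m ≤ u (n + m) + L) :
    ∃ s : ℝ≥0∞, Tendsto (fun n : ℕ => ENNReal.ofReal (u n) / n) atTop (𝓝 s) := by
  set v : ℕ → ℝ := fun n => L - u n with hv
  have hsub : Subadditive v := by
    intro p q
    have := hsuper p q
    simp only [hv]
    linarith
  have huv : ∀ n : ℕ, u n / n = L / n - v n / n := by
    intro n
    rw [← sub_div]
    congr 1
    simp [hv]
  have hev : (fun n : ℕ => ENNReal.ofReal (u n) / n)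
      =ᶠ[atTop] fun n : ℕ => ENNReal.ofReal (u n / n) := by
    filter_upwards [eventually_ge_atTop 1] with n hn
    have hn' : (0 : ℝ) < n := by exact_mod_cast hn
    rw [ENNReal.ofReal_div_of_pos hn', ENNReal.ofReal_natCast]
  by_cases hbdd : BddBelow (Set.range fun n : ℕ => v n / n)
  · have hvlim := hsub.tendsto_lim hbdd
    have h1 : Tendsto (fun n : ℕ => L / n - v n / n) atTop (𝓝 (0 - hsub.lim)) :=
      (tendsto_const_div_atTop_nhds_zero_nat L).sub hvlim
    rw [zero_sub] at h1
    have hu : Tendsto (fun n : ℕ => u n / n) atTop (𝓝 (-hsub.lim)) := by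
      refine h1.congr fun n => (huv n).symm
    refine ⟨ENNReal.ofReal (-hsub.lim), ?_⟩
    have h2 : Tendsto (fun n : ℕ => ENNReal.ofReal (u n / n)) atTop
        (𝓝 (ENNReal.ofReal (-hsub.lim))) :=
      (ENNReal.continuous_ofReal.tendsto _).comp hu
    exact h2.congr' hev.symm
  · refine ⟨⊤, ?_⟩
    have hu : Tendsto (fun n : ℕ => u n / n) atTop atTop := by
      rw [tendsto_atTop]
      intro M
      set R : ℝ := max M 0 + 1 with hR
      have hRpos : 0 < R := by
        have := le_max_right M 0
        simp only [hR]; linarith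
      set w : ℕ → ℝ := fun n => max (v n) (-(R * n)) with hw
      have hsubw : Subadditive w := by
        intro p q
        have h1 : v (p + q) ≤ w p + w q :=
          le_trans (hsub p q) (add_le_add (le_max_left _ _) (le_max_left _ _))
        have h2 : -(R * ((p + q : ℕ) : ℝ)) ≤ w p + w q := by
          have heq : -(R * ((p + q : ℕ) : ℝ)) = -(R * p) + -(R * q) := by push_cast; ring
          rw [heq]
          exact add_le_add (le_max_right _ _) (le_max_right _ _)
        exact max_le h1 h2
      have hbddw : BddBelow (Set.range fun n : ℕ => w n / n) := by
        refine ⟨-R, ?_⟩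
        rintro x ⟨n, rfl⟩
        rcases Nat.eq_zero_or_pos n with h | h
        · simp only [h, Nat.cast_zero, div_zero]
          linarith
        · have hn : (0 : ℝ) < n := by exact_mod_cast h
          have h1 : -(R * n) / n ≤ w n / n := by
            apply div_le_div_of_nonneg_right ?_ hn.le
            exact le_max_right _ _
          have heq : -(R * (n : ℝ)) / n = -R := by field_simp
          linarith
      obtain ⟨y, hymem, hy⟩ := not_bddBelow_iff.mp hbdd (-R)
      obtain ⟨k, rfl⟩ := hymem
      have hk0 : k ≠ 0 := by
        rintro rfl
        simp only [Nat.cast_zero, div_zero] at hy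
        linarith
      have hkpos : (0 : ℝ) < k := by
        have := Nat.pos_of_ne_zero hk0
        exact_mod_cast this
      have hwk : w k / k = -R := by
        have h1 : w k / k = max (v k / k) (-(R * k) / k) := by
          rw [hw]
          rw [max_div_div_right hkpos.le]
        have h2 : -(R * (k : ℝ)) / k = -R := by field_simp
        rw [h1, h2, max_eq_right]
        linarith
      have hlim : hsubw.lim ≤ -R :=
        le_trans (hsubw.lim_le_div hbddw hk0) (le_of_eq hwk)
      have hevlt : ∀ᶠ n : ℕ in atTop, w n / n < -R + 1 :=
        (hsubw.tendsto_lim hbddw).eventually_lt_const (by linarith)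
      filter_upwards [hevlt, eventually_ge_atTop 1] with n h1 h2
      have hn : (0 : ℝ) < n := by exact_mod_cast h2
      have h3 : v n / n ≤ w n / n :=
        div_le_div_of_nonneg_right (le_max_left _ _) hn.le
      have h4 : 0 ≤ L / n := by positivity
      have h5 := huv n
      have h6 := le_max_left M 0
      simp only [hR] at h1 ⊢
      linarith
    have h2 := ENNReal.tendsto_ofReal_atTop.comp hu
    exact h2.congr' hev.symm

section CrossHelpers
variable {𝒜 : Type*}

lemma shift_iterate_apply : ∀ (n : ℕ) (x : ℕ → 𝒜) (k : ℕ), (shift^[n] x) k = x (k + n) := by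
  intro n
  induction n with
  | zero => intro x k; simp
  | succ n ih =>
    intro x k
    rw [Function.iterate_succ_apply, ih]
    simp [shift, Nat.add_assoc]

section Meas
variable [Fintype 𝒜] [MeasurableSpace 𝒜] [MeasurableSingletonClass 𝒜]

lemma measurable_shift : Measurable (shift : (ℕ → 𝒜) → ℕ → 𝒜) :=
  measurable_pi_iff.mpr fun _ => measurable_pi_apply _

lemma measurable_pref (n : ℕ) : Measurable (pref n : (ℕ → 𝒜) → Fin n → 𝒜) :=
  measurable_pi_iff.mpr fun _ => measurable_pi_apply _

lemma cyl_append {n m : ℕ} (a : Fin n → 𝒜) (b : Fin m → 𝒜) :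
    cyl (Fin.append a b) = (fun x => (pref n x, pref m (shift^[n] x))) ⁻¹' {(a, b)} := by
  ext x
  simp only [cyl, Set.mem_setOf_eq, Set.mem_preimage, Set.mem_singleton_iff, Prod.mk.injEq]
  constructor
  · intro h
    constructor
    · funext i
      have := congrFun h (Fin.castAdd m i)
      simpa [pref, Fin.append_left] using this
    · funext j
      have := congrFun h (Fin.natAdd n j)
      simpa [pref, Fin.append_right, shift_iterate_apply, Nat.add_comm] using this
  · rintro ⟨h1, h2⟩
    funext c
    refine Fin.addCases (fun i => ?_) (fun j => ?_) c
    · have := congrFun h1 i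
      simpa [pref, Fin.append_left] using this
    · have := congrFun h2 j
      simpa [pref, Fin.append_right, shift_iterate_apply, Nat.add_comm] using this

variable (P : Measure (ℕ → 𝒜)) [IsProbabilityMeasure P]

lemma marg_nonneg (n : ℕ) (a : Fin n → 𝒜) : 0 ≤ marg P n a := ENNReal.toReal_nonneg

lemma marg_le_one (n : ℕ) (a : Fin n → 𝒜) : marg P n a ≤ 1 := by
  rw [marg, ← ENNReal.toReal_one]
  exact ENNReal.toReal_mono ENNReal.one_ne_top prob_le_one

lemma measurable_pairmap (n m : ℕ) :
    Measurable (fun x : ℕ → 𝒜 => (pref n x, pref m (shift^[n] x))) :=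
  ((measurable_pref n)).prodMk ((measurable_pref m).comp (measurable_shift.iterate n))

lemma sum_marg_eq_one (n : ℕ) : ∑ a : Fin n → 𝒜, marg P n a = 1 := by
  have h := sum_measure_preimage_singleton (μ := P) (univ : Finset (Fin n → 𝒜))
    (f := pref n) (fun b _ => (measurable_pref n) (measurableSet_singleton b))
  simp only [coe_univ, Set.preimage_univ, measure_univ] at h
  have : ∑ a : Fin n → 𝒜, marg P n a = (∑ a : Fin n → 𝒜, P (pref n ⁻¹' {a})).toReal := by
    rw [ENNReal.toReal_sum (fun a _ => measure_ne_top P _)]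
    rfl
  rw [this, h, ENNReal.toReal_one]

lemma measure_cyl_append_sum {n m : ℕ} (a : Fin n → 𝒜) :
    ∑ b : Fin m → 𝒜, P (cyl (Fin.append a b)) = P (cyl a) := by
  have hmeas : ∀ p : (Fin n → 𝒜) × (Fin m → 𝒜),
      MeasurableSet ((fun x : ℕ → 𝒜 => (pref n x, pref m (shift^[n] x))) ⁻¹' {p}) :=
    fun p => (measurable_pairmap n m) (measurableSet_singleton p)
  have h := sum_measure_preimage_singleton (μ := P) (({a} ×ˢ univ : Finset _))
    (f := fun x : ℕ → 𝒜 => (pref n x, pref m (shift^[n] x))) (fun p _ => hmeas p)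
  rw [Finset.sum_product, Finset.sum_singleton] at h
  have hs : (fun x : ℕ → 𝒜 => (pref n x, pref m (shift^[n] x))) ⁻¹'
      ↑(({a} ×ˢ univ : Finset ((Fin n → 𝒜) × (Fin m → 𝒜)))) = cyl a := by
    ext x
    simp [cyl, Set.mem_preimage, eq_comm]
  rw [hs] at h
  rw [← h]
  exact Finset.sum_congr rfl fun b _ => by rw [cyl_append]

lemma sum_marg_append_right {n m : ℕ} (a : Fin n → 𝒜) :
    ∑ b : Fin m → 𝒜, marg P (n + m) (Fin.append a b) = marg P n a := by
  have : ∑ b : Fin m → 𝒜, marg P (n + m) (Fin.append a b)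
      = (∑ b : Fin m → 𝒜, P (cyl (Fin.append a b))).toReal := by
    rw [ENNReal.toReal_sum (fun b _ => measure_ne_top P _)]; rfl
  rw [this, measure_cyl_append_sum]; rfl

lemma shiftInv_iterate (hP : ShiftInv P) (n : ℕ) (s : Set (ℕ → 𝒜)) :
    P (shift^[n] ⁻¹' s) = P s := by
  induction n with
  | zero => simp
  | succ n ih =>
    rw [Function.iterate_succ, Set.preimage_comp, hP, ih]

lemma sum_marg_append_left (hP : ShiftInv P) {n m : ℕ} (b : Fin m → 𝒜) :
    ∑ a : Fin n → 𝒜, marg P (n + m) (Fin.append a b) = marg P m b := by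
  have hmeas : ∀ p : (Fin n → 𝒜) × (Fin m → 𝒜),
      MeasurableSet ((fun x : ℕ → 𝒜 => (pref n x, pref m (shift^[n] x))) ⁻¹' {p}) :=
    fun p => (measurable_pairmap n m) (measurableSet_singleton p)
  have h := sum_measure_preimage_singleton (μ := P) ((univ ×ˢ {b} : Finset _))
    (f := fun x : ℕ → 𝒜 => (pref n x, pref m (shift^[n] x))) (fun p _ => hmeas p)
  rw [Finset.sum_product_right, Finset.sum_singleton] at h
  have hs : (fun x : ℕ → 𝒜 => (pref n x, pref m (shift^[n] x))) ⁻¹'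
      ↑((univ ×ˢ {b} : Finset ((Fin n → 𝒜) × (Fin m → 𝒜)))) = shift^[n] ⁻¹' cyl b := by
    ext x
    simp [cyl, Set.mem_preimage, eq_comm]
  rw [hs, shiftInv_iterate P hP] at h
  have : ∑ a : Fin n → 𝒜, marg P (n + m) (Fin.append a b)
      = (∑ a : Fin n → 𝒜, P (cyl (Fin.append a b))).toReal := by
    rw [ENNReal.toReal_sum (fun a _ => measure_ne_top P _)]; rfl
  rw [this]
  have : ∑ a : Fin n → 𝒜, P (cyl (Fin.append a b))
      = ∑ a : Fin n → 𝒜, P ((fun x : ℕ → 𝒜 => (pref n x, pref m (shift^[n] x))) ⁻¹' {(a, b)}) :=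
    Finset.sum_congr rfl fun a _ => by rw [cyl_append]
  rw [this, h]; rfl


variable (Q : Measure (ℕ → 𝒜)) [IsProbabilityMeasure Q]

/-- The real-valued cross-entropy sum. -/
noncomputable def uR (P Q : Measure (ℕ → 𝒜)) (n : ℕ) : ℝ :=
  ∑ a : Fin n → 𝒜, marg P n a * (-Real.log (marg Q n a))

lemma uR_term_nonneg (n : ℕ) (a : Fin n → 𝒜) :
    0 ≤ marg P n a * (-Real.log (marg Q n a)) :=
  mul_nonneg (marg_nonneg P n a)
    (neg_nonneg.mpr (Real.log_nonpos (marg_nonneg Q n a) (marg_le_one Q n a)))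

lemma uR_nonneg (n : ℕ) : 0 ≤ uR P Q n :=
  Finset.sum_nonneg fun a _ => uR_term_nonneg P Q n a

lemma crossTerm_eq_ofReal (n : ℕ)
    (hac : ∀ a : Fin n → 𝒜, marg P n a ≠ 0 → marg Q n a ≠ 0) :
    crossTerm P Q n = ENNReal.ofReal (uR P Q n) := by
  rw [uR, ENNReal.ofReal_sum_of_nonneg (fun a _ => uR_term_nonneg P Q n a)]
  refine Finset.sum_congr rfl fun a _ => ?_
  by_cases hPa : marg P n a = 0
  · simp [hPa]
  · rw [if_neg hPa, if_neg (hac a hPa), ← ENNReal.ofReal_mul (marg_nonneg P n a)]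

lemma crossTerm_eq_top_iff (n : ℕ) :
    crossTerm P Q n = ⊤ ↔ ∃ a : Fin n → 𝒜, marg P n a ≠ 0 ∧ marg Q n a = 0 := by
  rw [crossTerm, ENNReal.sum_eq_top]
  constructor
  · rintro ⟨a, -, ha⟩
    by_cases hPa : marg P n a = 0
    · simp [hPa] at ha
    by_cases hQa : marg Q n a = 0
    · exact ⟨a, hPa, hQa⟩
    · rw [if_neg hPa, if_neg hQa] at ha
      exact absurd ha (ENNReal.mul_ne_top ENNReal.ofReal_ne_top ENNReal.ofReal_ne_top)
  · rintro ⟨a, hPa, hQa⟩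
    refine ⟨a, Finset.mem_univ a, ?_⟩
    rw [if_neg hPa, if_pos hQa, ENNReal.mul_top]
    simp only [ne_eq, ENNReal.ofReal_eq_zero, not_le]
    exact lt_of_le_of_ne (marg_nonneg P n a) (Ne.symm hPa)

lemma crossTerm_top_propagate {C : ℝ}
    (hdec : ∀ (n m : ℕ) (a : Fin n → 𝒜) (b : Fin m → 𝒜),
      marg Q (n + m) (Fin.append a b) ≤ C * marg Q n a * marg Q m b)
    {N : ℕ} (h : crossTerm P Q N = ⊤) (k : ℕ) : crossTerm P Q (N + k) = ⊤ := by
  rw [crossTerm_eq_top_iff] at h ⊢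
  obtain ⟨a, hPa, hQa⟩ := h
  have hsum : ∑ b : Fin k → 𝒜, marg P (N + k) (Fin.append a b) ≠ 0 := by
    rw [sum_marg_append_right]; exact hPa
  obtain ⟨b, -, hb⟩ := Finset.exists_ne_zero_of_sum_ne_zero hsum
  refine ⟨Fin.append a b, hb, ?_⟩
  have hle := hdec N k a b
  rw [hQa] at hle
  simp only [mul_zero, zero_mul] at hle
  exact le_antisymm hle (marg_nonneg Q _ _)

lemma uR_superadd (hP : ShiftInv P) {C : ℝ} (hC : 1 ≤ C)
    (hdec : ∀ (n m : ℕ) (a : Fin n → 𝒜) (b : Fin m → 𝒜),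
      marg Q (n + m) (Fin.append a b) ≤ C * marg Q n a * marg Q m b)
    (hac : ∀ (k : ℕ) (a : Fin k → 𝒜), marg P k a ≠ 0 → marg Q k a ≠ 0)
    (n m : ℕ) :
    uR P Q n + uR P Q m ≤ uR P Q (n + m) + Real.log C := by
  have hsplit : uR P Q (n + m) = ∑ a : Fin n → 𝒜, ∑ b : Fin m → 𝒜,
      marg P (n + m) (Fin.append a b) * (-Real.log (marg Q (n + m) (Fin.append a b))) := by
    rw [uR]
    calc ∑ c : Fin (n + m) → 𝒜, marg P (n + m) c * (-Real.log (marg Q (n + m) c))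
        = ∑ p : (Fin n → 𝒜) × (Fin m → 𝒜), marg P (n + m) (Fin.append p.1 p.2) *
            (-Real.log (marg Q (n + m) (Fin.append p.1 p.2))) :=
          (Fintype.sum_equiv (Fin.appendEquiv n m)
            (fun p => marg P (n + m) (Fin.append p.1 p.2) *
              (-Real.log (marg Q (n + m) (Fin.append p.1 p.2)))) _ (fun p => rfl)).symm
      _ = ∑ a : Fin n → 𝒜, ∑ b : Fin m → 𝒜, marg P (n + m) (Fin.append a b) *
            (-Real.log (marg Q (n + m) (Fin.append a b))) := Fintype.sum_prod_type _
  have hone : ∑ a : Fin n → 𝒜, ∑ b : Fin m → 𝒜, marg P (n + m) (Fin.append a b) = 1 := by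
    calc ∑ a : Fin n → 𝒜, ∑ b : Fin m → 𝒜, marg P (n + m) (Fin.append a b)
        = ∑ a : Fin n → 𝒜, marg P n a :=
          Finset.sum_congr rfl fun a _ => sum_marg_append_right P a
      _ = 1 := sum_marg_eq_one P n
  have key : ∀ (a : Fin n → 𝒜) (b : Fin m → 𝒜),
      marg P (n + m) (Fin.append a b) * (-Real.log (marg Q n a) + -Real.log (marg Q m b))
      ≤ marg P (n + m) (Fin.append a b) *
        (Real.log C + -Real.log (marg Q (n + m) (Fin.append a b))) := by
    intro a b
    by_cases hPab : marg P (n + m) (Fin.append a b) = 0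
    · simp [hPab]
    · have hPpos : 0 < marg P (n + m) (Fin.append a b) :=
        lt_of_le_of_ne (marg_nonneg P _ _) (Ne.symm hPab)
      have hQab : 0 < marg Q (n + m) (Fin.append a b) :=
        lt_of_le_of_ne (marg_nonneg Q _ _) (Ne.symm (hac _ _ hPab))
      have hle := hdec n m a b
      have hQa : 0 < marg Q n a := by
        rcases (marg_nonneg Q n a).lt_or_eq with h | h
        · exact h
        · exfalso; rw [← h] at hle; simp only [mul_zero, zero_mul] at hle; linarith
      have hQb : 0 < marg Q m b := by
        rcases (marg_nonneg Q m b).lt_or_eq with h | h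
        · exact h
        · exfalso; rw [← h] at hle; simp only [mul_zero, zero_mul] at hle; linarith
      refine mul_le_mul_of_nonneg_left ?_ hPpos.le
      have hCpos : 0 < C := lt_of_lt_of_le one_pos hC
      have hlog : Real.log (marg Q (n + m) (Fin.append a b))
          ≤ Real.log C + Real.log (marg Q n a) + Real.log (marg Q m b) := by
        calc Real.log (marg Q (n + m) (Fin.append a b))
            ≤ Real.log (C * marg Q n a * marg Q m b) := Real.log_le_log hQab hle
          _ = Real.log C + Real.log (marg Q n a) + Real.log (marg Q m b) := by
              rw [Real.log_mul (by positivity) (ne_of_gt hQb),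
                Real.log_mul (ne_of_gt hCpos) (ne_of_gt hQa)]
      linarith
  calc uR P Q n + uR P Q m
      = ∑ a : Fin n → 𝒜, (∑ b : Fin m → 𝒜, marg P (n + m) (Fin.append a b)) *
          (-Real.log (marg Q n a))
        + ∑ b : Fin m → 𝒜, (∑ a : Fin n → 𝒜, marg P (n + m) (Fin.append a b)) *
          (-Real.log (marg Q m b)) := by
        rw [uR, uR]
        congr 1
        · exact Finset.sum_congr rfl fun a _ => by rw [sum_marg_append_right P a]
        · exact Finset.sum_congr rfl fun b _ => by rw [sum_marg_append_left P hP b]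
    _ = ∑ a : Fin n → 𝒜, ∑ b : Fin m → 𝒜,
          marg P (n + m) (Fin.append a b) * (-Real.log (marg Q n a))
        + ∑ b : Fin m → 𝒜, ∑ a : Fin n → 𝒜,
          marg P (n + m) (Fin.append a b) * (-Real.log (marg Q m b)) := by
        simp [Finset.sum_mul]
    _ = ∑ a : Fin n → 𝒜, ∑ b : Fin m → 𝒜,
          marg P (n + m) (Fin.append a b) *
            (-Real.log (marg Q n a) + -Real.log (marg Q m b)) := by
        rw [Finset.sum_comm (γ := Fin m → 𝒜)]
        rw [← Finset.sum_add_distrib]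
        refine Finset.sum_congr rfl fun a _ => ?_
        rw [← Finset.sum_add_distrib]
        exact Finset.sum_congr rfl fun b _ => by ring
    _ ≤ ∑ a : Fin n → 𝒜, ∑ b : Fin m → 𝒜,
          marg P (n + m) (Fin.append a b) *
            (Real.log C + -Real.log (marg Q (n + m) (Fin.append a b))) :=
        Finset.sum_le_sum fun a _ => Finset.sum_le_sum fun b _ => key a b
    _ = (∑ a : Fin n → 𝒜, ∑ b : Fin m → 𝒜, marg P (n + m) (Fin.append a b)) * Real.log C
        + uR P Q (n + m) := by
        rw [hsplit, Finset.sum_mul, ← Finset.sum_add_distrib]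
        refine Finset.sum_congr rfl fun a _ => ?_
        rw [Finset.sum_mul, ← Finset.sum_add_distrib]
        exact Finset.sum_congr rfl fun b _ => by ring
    _ = uR P Q (n + m) + Real.log C := by rw [hone]; ring

end Meas
end CrossHelpers

/-- If `ℚ` satisfies the upper-decoupling inequality `ℚ_{n+m}(ab) ≤ C ℚₙ(a) ℚₘ(b)`,
then the cross entropy `s^cross(ℙ|ℚ) = lim cₙ/n` exists in `[0, +∞]` (the sequence
either converges or properly diverges to `+∞`). -/
theorem cross_entropy_exists [Fintype 𝒜] [MeasurableSpace 𝒜] [MeasurableSingletonClass 𝒜]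
    (P Q : Measure (ℕ → 𝒜)) [IsProbabilityMeasure P] [IsProbabilityMeasure Q]
    (hP : ShiftInv P) (hQ : ShiftInv Q) (C : ℝ) (hC : 1 ≤ C)
    (hdec : ∀ (n m : ℕ) (a : Fin n → 𝒜) (b : Fin m → 𝒜),
      marg Q (n + m) (Fin.append a b) ≤ C * marg Q n a * marg Q m b) :
    ∃ s : ℝ≥0∞, Tendsto (fun n : ℕ => crossTerm P Q n / n) atTop (nhds s) := by
  by_cases htop : ∃ N, crossTerm P Q N = ⊤
  · obtain ⟨N, hN⟩ := htop
    refine ⟨⊤, ?_⟩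
    refine Tendsto.congr' ?_ tendsto_const_nhds
    filter_upwards [eventually_ge_atTop (N + 1)] with n hn
    have hkey : crossTerm P Q n = ⊤ := by
      obtain ⟨k, rfl⟩ : ∃ k, n = N + k := ⟨n - N, by omega⟩
      exact crossTerm_top_propagate P Q hdec hN k
    rw [hkey]
    exact (ENNReal.top_div_of_ne_top (ENNReal.natCast_ne_top n)).symm
  · push_neg at htop
    have hac : ∀ (k : ℕ) (a : Fin k → 𝒜), marg P k a ≠ 0 → marg Q k a ≠ 0 := by
      intro k a h1 h2
      exact htop k ((crossTerm_eq_top_iff P Q k).mpr ⟨a, h1, h2⟩)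
    obtain ⟨s, hs⟩ := fekete_ennreal (uR P Q) (uR_nonneg P Q) (Real.log_nonneg hC)
      (uR_superadd P Q hP hC hdec hac)
    refine ⟨s, hs.congr fun n => ?_⟩
    rw [crossTerm_eq_ofReal P Q n (hac n)]
end

section
/- For a stationary irreducible Markov chain with invariant probability vector π (all entries positive) and transition matrix P on a finite state space 𝒜, the entropy production with θ = id equals ep(ℙ) = ∑_{a,b∈𝒜} ½(π_a P_{a,b} − π_b P_{b,a}) log(π_a P_{a,b} / (π_b P_{b,a})), and ep(ℙ) = 0 if and only if detailed balance π_a P_{a,b} = π_b P_{b,a} holds for all a, b. -/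
/-!
Appending a letter `y` to a word ending in `x` multiplies its weight by `P x y` and the weight of
its reversal by `π y * P y x / π x`, so on the support (which is reversal-invariant) the log-ratio
`log (ℙₙ(a) / ℙₙ(â))` grows by `log (π x P x y / (π y P y x))`. Since `P` is stochastic and the
last letter of a word is `π`-distributed, the relative entropy of the `(n + 1)`-marginals is
exactly `n ∑ π x P x y log (π x P x y / (π y P y x))`, and antisymmetry of the logarithm turns this
sum into the symmetrised one. Each term `(u - v) log (u / v)` of the latter is nonnegative and
vanishes only when `u = v`.
-/

open Filter

/-- The `n`-th marginal of the stationary Markov measure generated by `(π, P)`: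
`ℙₙ(a) = π_{a₁} P_{a₁,a₂} ⋯ P_{a_{n−1},a_n}` (and `1` for the empty word). -/
noncomputable def markovW {𝒜 : Type*} (π : 𝒜 → ℝ) (P : Matrix 𝒜 𝒜 ℝ) :
    (n : ℕ) → (Fin n → 𝒜) → ℝ
  | 0, _ => 1
  | n + 1, a => π (a 0) * ∏ i : Fin n, P (a i.castSucc) (a i.succ)

open Finset

lemma sub_mul_log_div_nonneg {u v : ℝ} (hu : 0 ≤ u) (hv : 0 ≤ v) :
    0 ≤ (u - v) * Real.log (u / v) := by
  rcases hu.eq_or_lt with rfl | hu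
  · simp
  rcases hv.eq_or_lt with rfl | hv
  · simp
  rcases le_total u v with huv | huv
  · exact mul_nonneg_of_nonpos_of_nonpos (by linarith)
      (Real.log_nonpos (by positivity) ((div_le_one hv).2 huv))
  · exact mul_nonneg (by linarith) (Real.log_nonneg ((le_div_iff₀ hv).2 (by linarith)))

lemma sub_mul_log_div_eq_zero_iff {u v : ℝ} (hu : 0 ≤ u) (hv : 0 ≤ v) (huv : 0 < u ↔ 0 < v) :
    (u - v) * Real.log (u / v) = 0 ↔ u = v := by
  refine ⟨fun h => ?_, fun h => by rw [h, sub_self, zero_mul]⟩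
  rcases mul_eq_zero.1 h with h | h
  · linarith
  rcases Real.log_eq_zero.1 h with h | h | h
  · rcases div_eq_zero_iff.1 h with rfl | rfl
    · exact (le_antisymm (not_lt.1 fun h' => (huv.2 h').false) hv).symm
    · exact le_antisymm (not_lt.1 fun h' => (huv.1 h').false) hu
  · exact (div_eq_one_iff_eq fun hv0 => by simp [hv0] at h).1 h
  · linarith [div_nonneg hu hv]

section FluxSums

variable {α : Type*} [Fintype α]

lemma sum_sum_half_sub_mul_log_div (f : α → α → ℝ) :
    ∑ a, ∑ b, (f a b - f b a) / 2 * Real.log (f a b / f b a) =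
      ∑ a, ∑ b, f a b * Real.log (f a b / f b a) := by
  have hswap : ∑ a, ∑ b, f b a * Real.log (f a b / f b a) =
      -∑ a, ∑ b, f a b * Real.log (f a b / f b a) := by
    rw [sum_comm, ← sum_neg_distrib]
    refine sum_congr rfl fun a _ => ?_
    rw [← sum_neg_distrib]
    refine sum_congr rfl fun b _ => ?_
    rw [← inv_div, Real.log_inv, mul_neg]
  simp only [div_mul_eq_mul_div, sub_mul, sum_sub_distrib, ← sum_div, hswap]
  ring

lemma sum_sum_half_sub_mul_log_div_eq_zero_iff (f : α → α → ℝ) (hf : ∀ a b, 0 ≤ f a b)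
    (hsupp : ∀ a b, 0 < f a b ↔ 0 < f b a) :
    ∑ a, ∑ b, (f a b - f b a) / 2 * Real.log (f a b / f b a) = 0 ↔ ∀ a b, f a b = f b a := by
  simp only [div_mul_eq_mul_div, ← sum_div]
  rw [div_eq_zero_iff, or_iff_left two_ne_zero, ← Fintype.sum_prod_type',
    Fintype.sum_eq_zero_iff_of_nonneg fun p => sub_mul_log_div_nonneg (hf p.1 p.2) (hf p.2 p.1)]
  simp only [funext_iff, Prod.forall, Pi.zero_apply,
    sub_mul_log_div_eq_zero_iff (hf _ _) (hf _ _) (hsupp _ _)]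

end FluxSums

lemma Fin.sum_pi_snoc {α M : Type*} [Fintype α] [AddCommMonoid M] {n : ℕ}
    (F : (Fin (n + 1) → α) → M) :
    ∑ a, F a = ∑ b : Fin n → α, ∑ y, F (Fin.snoc b y) := by
  rw [← (Fin.snocEquiv fun _ => α).sum_comp, Fintype.sum_prod_type_right]
  rfl

section Words
variable {𝒜 : Type*} (π : 𝒜 → ℝ) (P : Matrix 𝒜 𝒜 ℝ)

lemma markovW_snoc (n : ℕ) (b : Fin (n + 1) → 𝒜) (y : 𝒜) :
    markovW π P (n + 2) (Fin.snoc b y) = markovW π P (n + 1) b * P (b (Fin.last n)) y := by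
  simp only [markovW, Fin.prod_univ_castSucc, Fin.succ_castSucc, Fin.snoc_castSucc, Fin.succ_last,
    Fin.snoc_last, ← Fin.castSucc_zero, mul_assoc]

lemma markovW_rev (n : ℕ) (a : Fin (n + 1) → 𝒜) :
    markovW π P (n + 1) (fun i => a i.rev) =
      π (a (Fin.last n)) * ∏ i : Fin n, P (a i.succ) (a i.castSucc) := by
  simp only [markovW, Fin.rev_zero, Fin.rev_castSucc, Fin.rev_succ]
  exact congrArg _ (Equiv.prod_comp Fin.revPerm fun i => P (a i.succ) (a i.castSucc))

lemma markovW_rev_snoc (n : ℕ) (b : Fin (n + 1) → 𝒜) (y : 𝒜) :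
    π (b (Fin.last n)) * markovW π P (n + 2) (fun i => (Fin.snoc b y : Fin (n + 2) → 𝒜) i.rev) =
      π y * P y (b (Fin.last n)) * markovW π P (n + 1) (fun i => b i.rev) := by
  simp only [markovW_rev, Fin.prod_univ_castSucc, Fin.succ_castSucc, Fin.snoc_castSucc,
    Fin.succ_last, Fin.snoc_last]
  ring

lemma markovW_succ_ne_zero_iff (hπ : ∀ a, π a ≠ 0) (n : ℕ) (a : Fin (n + 1) → 𝒜) :
    markovW π P (n + 1) a ≠ 0 ↔ ∀ i : Fin n, P (a i.castSucc) (a i.succ) ≠ 0 := by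
  simp [markovW, hπ, prod_ne_zero_iff]

lemma markovW_rev_ne_zero (hπ : ∀ a, π a ≠ 0) (hP : ∀ a b, P a b ≠ 0 → P b a ≠ 0) (n : ℕ)
    (a : Fin (n + 1) → 𝒜) (ha : markovW π P (n + 1) a ≠ 0) :
    markovW π P (n + 1) (fun i => a i.rev) ≠ 0 := by
  rw [markovW_rev]
  exact mul_ne_zero (hπ _) <| prod_ne_zero_iff.2 fun i _ =>
    hP _ _ ((markovW_succ_ne_zero_iff π P hπ n a).1 ha i)

lemma markovW_snoc_mul_log_div_rev (hπ : ∀ a, π a ≠ 0) (hP : ∀ a b, P a b ≠ 0 → P b a ≠ 0)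
    (n : ℕ) (b : Fin (n + 1) → 𝒜) (y : 𝒜) :
    markovW π P (n + 2) (Fin.snoc b y) *
        Real.log (markovW π P (n + 2) (Fin.snoc b y) /
          markovW π P (n + 2) (fun i => (Fin.snoc b y : Fin (n + 2) → 𝒜) i.rev)) =
      P (b (Fin.last n)) y * (markovW π P (n + 1) b *
          Real.log (markovW π P (n + 1) b / markovW π P (n + 1) (fun i => b i.rev))) +
        markovW π P (n + 1) b * (P (b (Fin.last n)) y *
          Real.log (π (b (Fin.last n)) * P (b (Fin.last n)) y /
            (π y * P y (b (Fin.last n))))) := by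
  have hrev := markovW_rev_snoc π P n b y
  rw [markovW_snoc]
  set x := b (Fin.last n)
  set w := markovW π P (n + 1) b
  set wr := markovW π P (n + 1) (fun i => b i.rev)
  by_cases hwp : w * P x y = 0
  · rcases mul_eq_zero.1 hwp with h | h <;> simp [h]
  obtain ⟨hw, hp⟩ := mul_ne_zero_iff.1 hwp
  have hwr : wr ≠ 0 := markovW_rev_ne_zero π P hπ hP n b hw
  have hq : π y * P y x ≠ 0 := mul_ne_zero (hπ y) (hP x y hp)
  replace hrev : markovW π P (n + 2) (fun i => (Fin.snoc b y : Fin (n + 2) → 𝒜) i.rev) =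
      π y * P y x * wr / π x := by
    rw [eq_div_iff (hπ x), mul_comm, hrev]
  have hratio : w * P x y / (π y * P y x * wr / π x) = w / wr * (π x * P x y / (π y * P y x)) := by
    field_simp
  rw [hrev, hratio, Real.log_mul (div_ne_zero hw hwr) (div_ne_zero (mul_ne_zero (hπ x) hp) hq)]
  ring

variable [Fintype 𝒜]

lemma sum_markovW_mul_last (hstat : ∀ b, ∑ a, π a * P a b = π b) (n : ℕ) (g : 𝒜 → ℝ) :
    ∑ b : Fin (n + 1) → 𝒜, markovW π P (n + 1) b * g (b (Fin.last n)) = ∑ x, π x * g x := by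
  induction n generalizing g with
  | zero =>
    rw [← (Equiv.funUnique (Fin 1) 𝒜).symm.sum_comp]
    simp [markovW]
  | succ n ih =>
    rw [Fin.sum_pi_snoc]
    simp only [markovW_snoc, Fin.snoc_last, mul_assoc, ← mul_sum]
    rw [ih fun x => ∑ y, P x y * g y]
    simp only [mul_sum, ← mul_assoc]
    rw [sum_comm]
    simp only [← sum_mul, hstat]

lemma sum_markovW_mul_log_div_rev (hπ : ∀ a, π a ≠ 0) (hP : ∀ a b, P a b ≠ 0 → P b a ≠ 0)
    (hPstoch : ∀ a, ∑ b, P a b = 1) (hstat : ∀ b, ∑ a, π a * P a b = π b) (n : ℕ) :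
    ∑ a : Fin (n + 1) → 𝒜, markovW π P (n + 1) a *
        Real.log (markovW π P (n + 1) a / markovW π P (n + 1) (fun i => a i.rev)) =
      n * ∑ x, ∑ y, π x * P x y * Real.log (π x * P x y / (π y * P y x)) := by
  induction n with
  | zero =>
    have hrev (a : Fin 1 → 𝒜) : (fun i => a i.rev) = a :=
      funext fun i => congrArg a (Subsingleton.elim _ _)
    simp only [hrev, Nat.cast_zero, zero_mul]
    exact sum_eq_zero fun a _ => by by_cases h : markovW π P 1 a = 0 <;> simp [h]
  | succ n ih =>
    rw [Fin.sum_pi_snoc]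
    simp only [markovW_snoc_mul_log_div_rev π P hπ hP, sum_add_distrib, ← sum_mul, hPstoch, one_mul,
      ← mul_sum]
    rw [ih, sum_markovW_mul_last π P hstat n
      fun x => ∑ y, P x y * Real.log (π x * P x y / (π y * P y x))]
    push_cast
    rw [add_one_mul]
    simp only [mul_sum _ _ (π _), mul_assoc]

end Words

lemma tendsto_div_natCast_of_succ_eq_mul {u : ℕ → ℝ} {T : ℝ} (h : ∀ n, u (n + 1) = n * T) :
    Tendsto (fun n => u n / n) atTop (nhds T) := by
  rw [← tendsto_add_atTop_iff_nat 1]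
  simpa [h, mul_div_right_comm] using (tendsto_natCast_div_add_atTop (1 : ℝ)).mul_const T

theorem markov_entropy_production_general {𝒜 : Type*} [Fintype 𝒜]
    (π : 𝒜 → ℝ) (P : Matrix 𝒜 𝒜 ℝ)
    (hπpos : ∀ a, 0 < π a)
    (hPnonneg : ∀ a b, 0 ≤ P a b) (hPstoch : ∀ a, ∑ b, P a b = 1)
    (hstat : ∀ b, ∑ a, π a * P a b = π b)
    (hzero : ∀ a b, 0 < π a * P a b ↔ 0 < π b * P b a) :
    Tendsto
        (fun n : ℕ =>
          (∑ a : Fin n → 𝒜,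
              markovW π P n a *
                Real.log (markovW π P n a / markovW π P n (fun i => a i.rev))) / n)
        atTop
        (nhds (∑ a, ∑ b,
          (π a * P a b - π b * P b a) / 2 * Real.log (π a * P a b / (π b * P b a)))) ∧
      ((∑ a, ∑ b,
          (π a * P a b - π b * P b a) / 2 * Real.log (π a * P a b / (π b * P b a))) = 0 ↔
        ∀ a b, π a * P a b = π b * P b a) := by
  have hflux : ∀ a b, 0 ≤ π a * P a b := fun a b => mul_nonneg (hπpos a).le (hPnonneg a b)
  have hP : ∀ a b, P a b ≠ 0 → P b a ≠ 0 := fun a b hab =>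
    right_ne_zero_of_mul ((hzero a b).1 (mul_pos (hπpos a) ((hPnonneg a b).lt_of_ne' hab))).ne'
  refine ⟨?_, sum_sum_half_sub_mul_log_div_eq_zero_iff (fun a b => π a * P a b) hflux hzero⟩
  rw [sum_sum_half_sub_mul_log_div fun a b => π a * P a b]
  exact tendsto_div_natCast_of_succ_eq_mul
    (sum_markovW_mul_log_div_rev π P (fun a => (hπpos a).ne') hP hPstoch hstat)

/-- For a stationary irreducible Markov chain with invariant probability vector `π`
(all entries positive) and transition matrix `P`, the entropy production with `θ = id`
equals `∑_{a,b} ½(π_a P_{a,b} − π_b P_{b,a}) log(π_a P_{a,b}/(π_b P_{b,a}))`, and it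
vanishes iff detailed balance holds. -/
theorem markov_entropy_production {𝒜 : Type*} [Fintype 𝒜] [DecidableEq 𝒜] [Nonempty 𝒜]
    (π : 𝒜 → ℝ) (P : Matrix 𝒜 𝒜 ℝ)
    (hπpos : ∀ a, 0 < π a) (hπsum : ∑ a, π a = 1)
    (hPnonneg : ∀ a b, 0 ≤ P a b) (hPstoch : ∀ a, ∑ b, P a b = 1)
    (hstat : ∀ b, ∑ a, π a * P a b = π b)
    (hirr : ∀ a b, ∃ k : ℕ, 0 < (P ^ k) a b)
    (hzero : ∀ a b, 0 < π a * P a b ↔ 0 < π b * P b a) :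
    Tendsto
        (fun n : ℕ =>
          (∑ a : Fin n → 𝒜,
              markovW π P n a *
                Real.log (markovW π P n a / markovW π P n (fun i => a i.rev))) / n)
        atTop
        (nhds (∑ a, ∑ b,
          (π a * P a b - π b * P b a) / 2 * Real.log (π a * P a b / (π b * P b a)))) ∧
      ((∑ a, ∑ b,
          (π a * P a b - π b * P b a) / 2 * Real.log (π a * P a b / (π b * P b a))) = 0 ↔
        ∀ a b, π a * P a b = π b * P b a) :=
  markov_entropy_production_general π P hπpos hPnonneg hPstoch hstat hzero
end

section
/- Let ℚ be a shift-invariant probability measure on 𝒜^ℕ and suppose there exist ℓ ∈ ℕ and ψ' ∈ (0,1) such that ℚ(A ∩ σ^{−s−ℓ}[a]) ≥ ψ'·ℚ(A)·ℚₙ(a) for every n, every word a ∈ 𝒜ⁿ, every s ∈ ℕ, and every event A measurable with respect to coordinates 1,…,s. Then for every word a with ℚₙ(a) > 0 and every J ∈ ℕ: ℚ({y : y_{j(n+ℓ)+1}^{j(n+ℓ)+n} ≠ a for all 0 ≤ j < J}) ≤ (1 − ψ'·ℚₙ(a))^{J−1}·(1 − ℚₙ(a)). -/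
open MeasureTheory Filter Finset

variable {𝒜 : Type*}

/-!
Condition on the event `A_J` that `a` has not appeared in the first `J` windows. It depends only
on the coordinates before the end of the `J`-th window, and the next window starts `ℓ` later, so
the mixing bound gives `ℚ(A_J ∩ [a] at window J) ≥ ψ' ℚ(A_J) ℚₙ(a)`, i.e.
`ℚ(A_{J+1}) ≤ (1 - ψ' ℚₙ(a)) ℚ(A_J)`. Iterate from `ℚ(A_1) = 1 - ℚₙ(a)`.
-/

/-- Positions are 0-indexed: `occursAt a c` is the paper's `y_{c+1}^{c+n} = a`. -/
def occursAt {n : ℕ} (a : Fin n → 𝒜) (c : ℕ) : Set (ℕ → 𝒜) :=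
  {y | ∀ i : Fin n, y (c + i.val) = a i}

/-- The paper's event `A_J`. -/
def avoidSet {n : ℕ} (a : Fin n → 𝒜) (ℓ J : ℕ) : Set (ℕ → 𝒜) :=
  {y | ∀ j < J, y ∉ occursAt a (j * (n + ℓ))}

def LowerPsiMixing [MeasurableSpace 𝒜] (Q : Measure (ℕ → 𝒜)) (ℓ : ℕ) (ψ' : ℝ) : Prop :=
  ∀ (s : ℕ) (A : Set (ℕ → 𝒜)), MeasurableSet A →
    (∀ y z : ℕ → 𝒜, (∀ i < s, y i = z i) → y ∈ A → z ∈ A) →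
    ∀ (n : ℕ) (a : Fin n → 𝒜),
      ψ' * Q.real A * marg Q n a ≤ Q.real (A ∩ occursAt a (s + ℓ))

section Words

variable {n : ℕ} (a : Fin n → 𝒜)

theorem occursAt_zero : occursAt a 0 = cyl a := by
  ext y
  simp [occursAt, cyl, pref, funext_iff]

theorem measurableSet_occursAt [MeasurableSpace 𝒜] [MeasurableSingletonClass 𝒜] (c : ℕ) :
    MeasurableSet (occursAt a c) := by
  simp only [occursAt, Set.ofPred_forall]
  exact .iInter fun i => measurable_pi_apply _ (measurableSet_singleton _)

theorem measurableSet_avoidSet [MeasurableSpace 𝒜] [MeasurableSingletonClass 𝒜]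
    (ℓ J : ℕ) :
    MeasurableSet (avoidSet a ℓ J) := by
  simp only [avoidSet, Set.ofPred_forall]
  exact .iInter fun j => .iInter fun _ => (measurableSet_occursAt a _).compl

theorem avoidSet_one (ℓ : ℕ) : avoidSet a ℓ 1 = (cyl a)ᶜ := by
  ext y
  simp [avoidSet, ← occursAt_zero]

theorem avoidSet_succ (ℓ J : ℕ) :
    avoidSet a ℓ (J + 1) = avoidSet a ℓ J \ occursAt a (J * (n + ℓ)) := by
  ext y
  simp only [avoidSet, Set.mem_sdiff, Set.mem_ofPred_eq, Nat.lt_succ_iff_lt_or_eq, or_imp,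
    forall_and, forall_eq]

theorem mem_avoidSet_of_eqOn {ℓ K : ℕ} {y z : ℕ → 𝒜}
    (hyz : ∀ i < K * (n + ℓ) + n, y i = z i) (hy : y ∈ avoidSet a ℓ (K + 1)) :
    z ∈ avoidSet a ℓ (K + 1) := by
  intro j hj hz
  refine hy j hj fun i => ?_
  have hj : j * (n + ℓ) ≤ K * (n + ℓ) := Nat.mul_le_mul_right _ (by omega)
  rw [hyz _ (by omega)]
  exact hz i

end Words

theorem measureReal_sdiff_le_of_le_inter {α : Type*} [MeasurableSpace α] {μ : Measure α}
    [IsFiniteMeasure μ] {A B : Set α} {c : ℝ} (hB : MeasurableSet B)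
    (h : c * μ.real A ≤ μ.real (A ∩ B)) : μ.real (A \ B) ≤ (1 - c) * μ.real A := by
  have := measureReal_inter_add_sdiff (μ := μ) (s := A) hB
  linarith

section Mixing

variable [MeasurableSpace 𝒜] {Q : Measure (ℕ → 𝒜)} {ℓ : ℕ} {ψ' : ℝ} {n : ℕ} (a : Fin n → 𝒜)

/-- Applied to the whole space, the mixing bound forces `ψ' ℚₙ(a) ≤ 1`. -/
theorem LowerPsiMixing.mul_marg_le_one [IsProbabilityMeasure Q] (hmix : LowerPsiMixing Q ℓ ψ') :
    ψ' * marg Q n a ≤ 1 := by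
  have h := hmix 0 Set.univ .univ (fun _ _ _ _ => trivial) n a
  rw [probReal_univ, mul_one, Set.univ_inter] at h
  exact h.trans measureReal_le_one

theorem LowerPsiMixing.measureReal_avoidSet_succ_le [MeasurableSingletonClass 𝒜]
    [IsFiniteMeasure Q] (hmix : LowerPsiMixing Q ℓ ψ') (K : ℕ) :
    Q.real (avoidSet a ℓ (K + 2)) ≤
      (1 - ψ' * marg Q n a) * Q.real (avoidSet a ℓ (K + 1)) := by
  have hwindow : (K + 1) * (n + ℓ) = K * (n + ℓ) + n + ℓ := by ring
  rw [avoidSet_succ, hwindow]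
  refine measureReal_sdiff_le_of_le_inter (measurableSet_occursAt a _) ?_
  have h := hmix _ _ (measurableSet_avoidSet a ℓ (K + 1))
    (fun _ _ hyz hy => mem_avoidSet_of_eqOn a hyz hy) n a
  linarith

theorem LowerPsiMixing.measureReal_avoidSet_le [MeasurableSingletonClass 𝒜]
    [IsProbabilityMeasure Q] (hmix : LowerPsiMixing Q ℓ ψ') (K : ℕ) :
    Q.real (avoidSet a ℓ (K + 1)) ≤ (1 - ψ' * marg Q n a) ^ K * (1 - marg Q n a) := by
  induction K with
  | zero =>
    have hcyl : MeasurableSet (cyl a) := occursAt_zero a ▸ measurableSet_occursAt a 0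
    rw [avoidSet_one, probReal_compl_eq_one_sub hcyl, pow_zero, one_mul]
    rfl
  | succ K ih =>
    calc Q.real (avoidSet a ℓ (K + 2))
        ≤ (1 - ψ' * marg Q n a) * Q.real (avoidSet a ℓ (K + 1)) :=
          hmix.measureReal_avoidSet_succ_le a K
      _ ≤ (1 - ψ' * marg Q n a) * ((1 - ψ' * marg Q n a) ^ K * (1 - marg Q n a)) :=
          mul_le_mul_of_nonneg_left ih (by linarith [hmix.mul_marg_le_one a])
      _ = (1 - ψ' * marg Q n a) ^ (K + 1) * (1 - marg Q n a) := by ring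

end Mixing

theorem psi_prime_avoidance_bound_general [MeasurableSpace 𝒜]
    [MeasurableSingletonClass 𝒜]
    (Q : Measure (ℕ → 𝒜)) [IsProbabilityMeasure Q]
    (ℓ : ℕ) (ψ' : ℝ)
    (hmix : ∀ (s : ℕ) (A : Set (ℕ → 𝒜)), MeasurableSet A →
      (∀ y z : ℕ → 𝒜, (∀ i < s, y i = z i) → y ∈ A → z ∈ A) →
      ∀ (n : ℕ) (a : Fin n → 𝒜),
        ψ' * (Q A).toReal * marg Q n a ≤
          (Q (A ∩ {y | ∀ i : Fin n, y (s + ℓ + i.val) = a i})).toReal) :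
    ∀ (n : ℕ) (a : Fin n → 𝒜), 0 < marg Q n a → ∀ J : ℕ, 1 ≤ J →
      (Q {y | ∀ j < J, ¬ ∀ i : Fin n, y (j * (n + ℓ) + i.val) = a i}).toReal ≤
        (1 - ψ' * marg Q n a) ^ (J - 1) * (1 - marg Q n a) := by
  intro n a _ J hJ
  obtain ⟨K, rfl⟩ : ∃ K, J = K + 1 := ⟨J - 1, by omega⟩
  exact LowerPsiMixing.measureReal_avoidSet_le (Q := Q) (ℓ := ℓ) a hmix K

/-- Under a `ψ'`-type lower-mixing bound at lag `ℓ` for `ℚ`, iterating the conditional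
estimate yields: for every word `a` with `ℚₙ(a) > 0` and every `J ≥ 1`,
`ℚ({y : y_{j(n+ℓ)+1}^{j(n+ℓ)+n} ≠ a for all 0 ≤ j < J}) ≤ (1−ψ'ℚₙ(a))^{J−1}(1−ℚₙ(a))`. -/
theorem psi_prime_avoidance_bound [Fintype 𝒜] [MeasurableSpace 𝒜]
    [MeasurableSingletonClass 𝒜]
    (Q : Measure (ℕ → 𝒜)) [IsProbabilityMeasure Q] (hQ : ShiftInv Q)
    (ℓ : ℕ) (ψ' : ℝ) (hψ0 : 0 < ψ') (hψ1 : ψ' < 1)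
    (hmix : ∀ (s : ℕ) (A : Set (ℕ → 𝒜)), MeasurableSet A →
      (∀ y z : ℕ → 𝒜, (∀ i < s, y i = z i) → y ∈ A → z ∈ A) →
      ∀ (n : ℕ) (a : Fin n → 𝒜),
        ψ' * (Q A).toReal * marg Q n a ≤
          (Q (A ∩ {y | ∀ i : Fin n, y (s + ℓ + i.val) = a i})).toReal) :
    ∀ (n : ℕ) (a : Fin n → 𝒜), 0 < marg Q n a → ∀ J : ℕ, 1 ≤ J →
      (Q {y | ∀ j < J, ¬ ∀ i : Fin n, y (j * (n + ℓ) + i.val) = a i}).toReal ≤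
        (1 - ψ' * marg Q n a) ^ (J - 1) * (1 - marg Q n a) :=
  psi_prime_avoidance_bound_general Q ℓ ψ' hmix
end

section
/- Suppose ℙ is shift-invariant on 𝒜^ℕ and there exist n₀ and a word a ∈ 𝒜^{n₀} with ℙ_{n₀}(a) > 0 but ℙ̂_{n₀}(a) = 0. If ℙ additionally satisfies the upper-decoupling inequality ℙ_{n+m}(ab) ≤ C ℙₙ(a)ℙₘ(b), then for ℙ-almost every x in the set Ω₀ = {x : ℙₙ(x₁ⁿ) > 0 and ℙ̂ₙ(x₁ⁿ) = 0 for some n}, R̂ₙ(x) = ∞ for all sufficiently large n. -/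
open MeasureTheory Filter Finset

variable {𝒜 : Type*}

/-- The waiting time `Wₙ(x,y)`: first `k ≥ 1` such that `y_k^{k+n−1} = x₁ⁿ`
(0-indexed: `y (k−1+i) = x i` for `i < n`), with value `∞` if no such `k` exists. -/
noncomputable def waitT (n : ℕ) (x y : ℕ → 𝒜) : ℕ∞ :=
  sInf ((fun k : ℕ => (k : ℕ∞)) ''
    {k : ℕ | 1 ≤ k ∧ ∀ i : Fin n, y (k - 1 + i.val) = x i.val})

/-- The recurrence time `Rₙ(x)`: first `k ≥ 1` such that `x_{n+k}^{n+k+n−1} = x₁ⁿ`. -/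
noncomputable def recT (n : ℕ) (x : ℕ → 𝒜) : ℕ∞ :=
  sInf ((fun k : ℕ => (k : ℕ∞)) ''
    {k : ℕ | 1 ≤ k ∧ ∀ i : Fin n, x (n + k - 1 + i.val) = x i.val})

/-- The reversed recurrence time `R̂ₙ(x)`: first `k ≥ 1` such that
`x_{n+k}^{n+k+n−1} = x̂₁ⁿ`, where `x̂₁ⁿ` is the `θ`-reversal of the `n`-prefix. -/
noncomputable def recRevT (θ : 𝒜 → 𝒜) (n : ℕ) (x : ℕ → 𝒜) : ℕ∞ :=
  sInf ((fun k : ℕ => (k : ℕ∞)) ''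
    {k : ℕ | 1 ≤ k ∧ ∀ i : Fin n, x (n + k - 1 + i.val) = wordRev θ (pref n x) i})

lemma shift_iter (j : ℕ) (y : ℕ → 𝒜) (i : ℕ) : (shift^[j] y) i = y (i + j) := by
  induction j generalizing y with
  | zero => simp
  | succ j ih =>
      rw [Function.iterate_succ_apply, ih]
      simp only [shift]
      ring_nf

lemma shiftInv_iter [MeasurableSpace 𝒜] (P : Measure (ℕ → 𝒜)) (hinv : ShiftInv P)
    (j : ℕ) (s : Set (ℕ → 𝒜)) : P ((shift^[j]) ⁻¹' s) = P s := by
  induction j with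
  | zero => simp
  | succ j ih =>
      rw [Function.iterate_succ, Set.preimage_comp, hinv, ih]

/-- Monotonicity: if the cylinder of the reversed `n`-prefix is null, so is that of the
reversed `m`-prefix for `m ≥ n`. -/
lemma rev_cyl_null_mono [MeasurableSpace 𝒜] (P : Measure (ℕ → 𝒜)) (hinv : ShiftInv P)
    (θ : 𝒜 → 𝒜) (x : ℕ → 𝒜) {n m : ℕ} (hnm : n ≤ m)
    (h0 : P (cyl (wordRev θ (pref n x))) = 0) :
    P (cyl (wordRev θ (pref m x))) = 0 := by
  apply measure_mono_null (t := (shift^[m - n]) ⁻¹' cyl (wordRev θ (pref n x)))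
  · intro y hy
    have hy' : pref m y = wordRev θ (pref m x) := hy
    show pref n (shift^[m - n] y) = wordRev θ (pref n x)
    funext i
    have him : i.val + (m - n) < m := by omega
    have := congrFun hy' ⟨i.val + (m - n), him⟩
    simp only [pref, wordRev, Fin.val_rev] at this ⊢
    rw [shift_iter, this]
    congr 2
    omega
  · rw [shiftInv_iter P hinv]; exact h0

/-- If `ℙₙ ≪ ℙ̂ₙ` fails (there is a word with `ℙ_{n₀}(a) > 0` but `ℙ̂_{n₀}(a) = 0`) and
`ℙ` satisfies upper decoupling, then for `ℙ`-almost every `x` in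
`Ω₀ = {x : ℙₙ(x₁ⁿ) > 0 and ℙ̂ₙ(x₁ⁿ) = 0 for some n}`, one has `R̂ₙ(x) = ∞` for all
sufficiently large `n`. -/
theorem recRev_eventually_infinite [Fintype 𝒜] [MeasurableSpace 𝒜]
    [MeasurableSingletonClass 𝒜]
    (θ : 𝒜 → 𝒜) (hθ : Function.Involutive θ)
    (P : Measure (ℕ → 𝒜)) [IsProbabilityMeasure P] (hinv : ShiftInv P)
    (C : ℝ) (hC : 1 ≤ C)
    (hdec : ∀ (n m : ℕ) (a : Fin n → 𝒜) (b : Fin m → 𝒜),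
      marg P (n + m) (Fin.append a b) ≤ C * marg P n a * marg P m b)
    (n₀ : ℕ) (a : Fin n₀ → 𝒜)
    (ha : 0 < marg P n₀ a) (ha' : marg P n₀ (wordRev θ a) = 0) :
    ∀ᵐ x ∂P,
      (∃ n : ℕ, 0 < marg P n (pref n x) ∧ marg P n (wordRev θ (pref n x)) = 0) →
        ∀ᶠ n in Filter.atTop, recRevT θ n x = ⊤ := by
  -- Key: for any word `b` whose reversal is null, a.e. no `x` with prefix `b` has a
  -- finite reversed recurrence time.
  have key : ∀ (m : ℕ) (b : Fin m → 𝒜), P (cyl (wordRev θ b)) = 0 →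
      P {x | pref m x = b ∧ recRevT θ m x ≠ ⊤} = 0 := by
    intro m b hb
    apply measure_mono_null (t := ⋃ j : ℕ, (shift^[j]) ⁻¹' cyl (wordRev θ b))
    · rintro x ⟨hpx, hR⟩
      have hne : {k : ℕ | 1 ≤ k ∧
          ∀ i : Fin m, x (m + k - 1 + i.val) = wordRev θ (pref m x) i}.Nonempty := by
        by_contra h
        rw [Set.not_nonempty_iff_eq_empty] at h
        exact hR (by simp [recRevT, h])
      obtain ⟨k, hk1, hk⟩ := hne
      refine Set.mem_iUnion.2 ⟨m + k - 1, ?_⟩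
      show pref m (shift^[m + k - 1] x) = wordRev θ b
      funext i
      simp only [pref]
      rw [shift_iter, Nat.add_comm i.val (m + k - 1), hk i, hpx]
    · exact measure_iUnion_null fun j => by rw [shiftInv_iter P hinv]; exact hb
  -- The countable union of all bad sets is null.
  have null : P (⋃ m : ℕ, ⋃ b : Fin m → 𝒜,
      {x | P (cyl (wordRev θ b)) = 0 ∧ pref m x = b ∧ recRevT θ m x ≠ ⊤}) = 0 := by
    refine measure_iUnion_null fun m => measure_iUnion_null fun b => ?_
    by_cases hb : P (cyl (wordRev θ b)) = 0
    · refine measure_mono_null ?_ (key m b hb)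
      intro x hx
      exact ⟨hx.2.1, hx.2.2⟩
    · have : {x : ℕ → 𝒜 | P (cyl (wordRev θ b)) = 0 ∧ pref m x = b ∧ recRevT θ m x ≠ ⊤}
          = ∅ := by
        ext x; simp [hb]
      rw [this]; exact measure_empty
  rw [ae_iff]
  apply measure_mono_null _ null
  intro x hx
  rw [Set.mem_setOf_eq, Classical.not_imp] at hx
  obtain ⟨⟨n, _, hrev⟩, hnot⟩ := hx
  have hrev0 : P (cyl (wordRev θ (pref n x))) = 0 := by
    have hfin := measure_ne_top P (cyl (wordRev θ (pref n x)))
    simpa [marg, ENNReal.toReal_eq_zero_iff, hfin] using hrev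
  rw [Filter.not_eventually] at hnot
  obtain ⟨m, hnm, hRm⟩ := (Filter.frequently_atTop.1 hnot n)
  refine Set.mem_iUnion.2 ⟨m, Set.mem_iUnion.2 ⟨pref m x, ?_⟩⟩
  exact ⟨rev_cyl_null_mono P hinv θ x hnm hrev0, rfl, hRm⟩
end

section
/- Let ℙ and ℚ be shift-invariant probability measures on 𝒜^ℕ with Wₙ(x,y) = inf{k ≥ 1 : y_k^{k+n−1} = x₁ⁿ}. For every ε > 0, define 𝓑ₙ,ε := {(x,y) : Wₙ(x,y) ≤ exp(−log ℚₙ(x₁ⁿ) − nε)}. Then (ℙ×ℚ)(𝓑ₙ,ε) ≤ e^{−nε} for every n, and hence ∑ₙ (ℙ×ℚ)(𝓑ₙ,ε) < ∞; consequently liminf_{n→∞}(1/n)(log Wₙ(x,y) + log ℚₙ(x₁ⁿ)) ≥ 0 for (ℙ×ℚ)-almost every (x,y). No mixing assumption on ℙ or ℚ is needed. -/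
/-! For fixed `x`, the event `Wₙ(x, ·) ≤ t` is covered by the `⌊t⌋` shifted copies of the
cylinder `[x₁ⁿ]`, each of `ℚ`-mass `ℚₙ(x₁ⁿ)` by shift invariance. With
`t = e^{-nε} / ℚₙ(x₁ⁿ)` the union bound gives mass at most `e^{-nε}` uniformly in `x`, so
`(ℙ×ℚ)(𝓑ₙ,ε) ≤ e^{-nε}` is summable in `n`. By Borel–Cantelli, almost surely
`(1/n)(log Wₙ + log ℚₙ(x₁ⁿ)) ≥ -ε` eventually, and letting `ε = 1/(m+1)` range over
countably many values gives the liminf bound. -/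

open MeasureTheory Filter Finset

variable {𝒜 : Type*}

/-- `(1/n)(log Wₙ(x,y) + log ℚₙ(x₁ⁿ))`, valued in `EReal`, equal to `⊤` when
`Wₙ(x,y) = ∞` (convention `log ∞ = ∞`). -/
noncomputable def waitLogTerm [Fintype 𝒜] [MeasurableSpace 𝒜] (Q : Measure (ℕ → 𝒜))
    (n : ℕ) (x y : ℕ → 𝒜) : EReal :=
  if waitT n x y = ⊤ then (⊤ : EReal)
  else (((Real.log (WithTop.untopD 0 (waitT n x y) : ℕ) +
      Real.log (marg Q n (pref n x))) / n : ℝ) : EReal)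

open scoped ENNReal

lemma shift_iterate_apply_s19 (j : ℕ) (y : ℕ → 𝒜) (i : ℕ) : shift^[j] y i = y (i + j) := by
  induction j generalizing y with
  | zero => rfl
  | succ j ih => rw [Function.iterate_succ_apply, ih]; rfl

lemma pref_shift_iterate (n j : ℕ) (y : ℕ → 𝒜) :
    pref n (shift^[j] y) = fun i : Fin n => y (j + i) := by
  funext i
  simp only [pref, shift_iterate_apply_s19, Nat.add_comm]

lemma one_le_and_matches_of_waitT_eq {n k : ℕ} {x y : ℕ → 𝒜} (h : waitT n x y = k) :
    1 ≤ k ∧ ∀ i : Fin n, y (k - 1 + i.val) = x i.val := by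
  have hne : ((fun k : ℕ => (k : ℕ∞)) ''
      {k : ℕ | 1 ≤ k ∧ ∀ i : Fin n, y (k - 1 + i.val) = x i.val}).Nonempty := by
    by_contra hempty
    rw [Set.not_nonempty_iff_eq_empty] at hempty
    simp [waitT, hempty] at h
  have hmem : waitT n x y ∈ _ := csInf_mem hne
  obtain ⟨j, hj, hjk⟩ := h ▸ hmem
  exact Nat.cast_injective hjk ▸ hj

lemma waitT_le_subset_iUnion_cyl_prod {n : ℕ} (t : (Fin n → 𝒜) → ℝ) :
    {p : (ℕ → 𝒜) × (ℕ → 𝒜) | ∃ k : ℕ, waitT n p.1 p.2 = k ∧ (k : ℝ) ≤ t (pref n p.1)} ⊆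
      ⋃ a : Fin n → 𝒜, cyl a ×ˢ ⋃ j ∈ range ⌊t a⌋₊, shift^[j] ⁻¹' cyl a := by
  rintro ⟨x, y⟩ ⟨k, hk, hkt⟩
  obtain ⟨hk1, hmatch⟩ := one_le_and_matches_of_waitT_eq hk
  refine Set.mem_iUnion.mpr ⟨pref n x, rfl, Set.mem_iUnion₂.mpr ⟨k - 1, ?_, ?_⟩⟩
  · have : k ≤ ⌊t (pref n x)⌋₊ := Nat.le_floor hkt
    rw [mem_range]
    omega
  · show pref n _ = pref n x
    rw [pref_shift_iterate]
    exact funext hmatch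

section Measure

variable [MeasurableSpace 𝒜]

lemma ShiftInv.measure_preimage_iterate {Q : Measure (ℕ → 𝒜)} (hQ : ShiftInv Q) (j : ℕ)
    (s : Set (ℕ → 𝒜)) : Q (shift^[j] ⁻¹' s) = Q s := by
  induction j with
  | zero => rfl
  | succ j ih => rw [Function.iterate_succ, Set.preimage_comp, hQ, ih]

lemma ShiftInv.measure_biUnion_range_preimage_iterate_le {Q : Measure (ℕ → 𝒜)}
    (hQ : ShiftInv Q) (N : ℕ) (s : Set (ℕ → 𝒜)) :
    Q (⋃ j ∈ range N, shift^[j] ⁻¹' s) ≤ N * Q s :=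
  calc Q (⋃ j ∈ range N, shift^[j] ⁻¹' s) ≤ ∑ j ∈ range N, Q (shift^[j] ⁻¹' s) :=
        measure_biUnion_finset_le _ _
    _ = N * Q s := by simp only [hQ.measure_preimage_iterate, sum_const, card_range, nsmul_eq_mul]

variable [MeasurableSingletonClass 𝒜]

lemma measurableSet_cyl {n : ℕ} (a : Fin n → 𝒜) : MeasurableSet (cyl a) := by
  have hcyl : cyl a = ⋂ i : Fin n, (fun x : ℕ → 𝒜 => x i) ⁻¹' {a i} := by
    ext x
    simp [cyl, pref, funext_iff]
  rw [hcyl]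
  exact .iInter fun i => measurable_pi_apply _ (measurableSet_singleton _)

lemma sum_measure_cyl [Fintype 𝒜] (P : Measure (ℕ → 𝒜)) (n : ℕ) :
    ∑ a : Fin n → 𝒜, P (cyl a) = P Set.univ := by
  have hdisj : Pairwise (Function.onFun Disjoint fun a : Fin n → 𝒜 => cyl a) :=
    fun a b hab => Set.disjoint_left.mpr fun x hxa hxb => hab (hxa.symm.trans hxb)
  have hcover : (⋃ a : Fin n → 𝒜, cyl a) = Set.univ :=
    Set.iUnion_eq_univ_iff.mpr fun x => ⟨pref n x, rfl⟩
  rw [← hcover, measure_iUnion hdisj measurableSet_cyl, tsum_fintype]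

lemma measure_prod_waitT_le [Fintype 𝒜] (P : Measure (ℕ → 𝒜)) [IsProbabilityMeasure P]
    {Q : Measure (ℕ → 𝒜)} [SFinite Q] (hQ : ShiftInv Q) {n : ℕ} (t : (Fin n → 𝒜) → ℝ)
    {c : ℝ≥0∞} (hc : ∀ a, ⌊t a⌋₊ * Q (cyl a) ≤ c) :
    (P.prod Q) {p | ∃ k : ℕ, waitT n p.1 p.2 = k ∧ (k : ℝ) ≤ t (pref n p.1)} ≤ c :=
  calc _ ≤ (P.prod Q) (⋃ a, cyl a ×ˢ ⋃ j ∈ range ⌊t a⌋₊, shift^[j] ⁻¹' cyl a) :=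
        measure_mono (waitT_le_subset_iUnion_cyl_prod t)
    _ ≤ ∑ a, (P.prod Q) (cyl a ×ˢ ⋃ j ∈ range ⌊t a⌋₊, shift^[j] ⁻¹' cyl a) :=
        measure_iUnion_fintype_le _ _
    _ = ∑ a, P (cyl a) * Q (⋃ j ∈ range ⌊t a⌋₊, shift^[j] ⁻¹' cyl a) := by
        simp only [Measure.prod_prod]
    _ ≤ ∑ a, P (cyl a) * c := by
        gcongr with a
        exact (hQ.measure_biUnion_range_preimage_iterate_le _ _).trans (hc a)
    _ = c := by rw [← sum_mul, sum_measure_cyl, measure_univ, one_mul]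

end Measure

lemma natFloor_exp_neg_log_sub_mul_le {q : ℝ≥0∞} (hq : q ≠ ∞) (c : ℝ) :
    (⌊Real.exp (-Real.log q.toReal - c)⌋₊ : ℝ≥0∞) * q ≤ ENNReal.ofReal (Real.exp (-c)) := by
  rcases eq_or_ne q 0 with rfl | hq0
  · simp
  have hpos : 0 < q.toReal := ENNReal.toReal_pos hq0 hq
  have hexp : Real.exp (-Real.log q.toReal - c) * q.toReal = Real.exp (-c) := by
    rw [sub_eq_add_neg, Real.exp_add, Real.exp_neg, Real.exp_log hpos]
    field_simp
  calc (⌊Real.exp (-Real.log q.toReal - c)⌋₊ : ℝ≥0∞) * q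
        = ENNReal.ofReal (⌊Real.exp (-Real.log q.toReal - c)⌋₊ * q.toReal) := by
        rw [ENNReal.ofReal_mul (Nat.cast_nonneg _), ENNReal.ofReal_natCast,
          ENNReal.ofReal_toReal hq]
    _ ≤ ENNReal.ofReal (Real.exp (-c)) := by
        rw [← hexp]
        gcongr
        exact Nat.floor_le (Real.exp_pos _).le

lemma summable_exp_neg_nat_mul {ε : ℝ} (hε : 0 < ε) :
    Summable fun n : ℕ => Real.exp (-(n * ε)) := by
  simpa only [mul_neg] using Real.summable_exp_nat_mul_iff.mpr (neg_lt_zero.mpr hε)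

lemma zero_le_liminf_of_eventually_neg_le {u : ℕ → EReal} {ε : ℕ → ℝ}
    (hε : Tendsto ε atTop (nhds 0)) (h : ∀ m, ∀ᶠ n in atTop, ((-ε m : ℝ) : EReal) ≤ u n) :
    0 ≤ liminf u atTop := by
  have hlim : Tendsto (fun m => ((-ε m : ℝ) : EReal)) atTop (nhds 0) := by
    simpa only [Function.comp_def, neg_zero, EReal.coe_zero] using
      (continuous_coe_real_ereal.tendsto _).comp hε.neg
  exact le_of_tendsto' hlim fun m => le_liminf_of_le (by isBoundedDefault) (h m)

section WaitingTime

variable [MeasurableSpace 𝒜]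

/-- The set `𝓑ₙ,ε`. -/
def waitBadSet (Q : Measure (ℕ → 𝒜)) (n : ℕ) (ε : ℝ) : Set ((ℕ → 𝒜) × (ℕ → 𝒜)) :=
  {p | ∃ k : ℕ, waitT n p.1 p.2 = k ∧
    (k : ℝ) ≤ Real.exp (-Real.log (marg Q n (pref n p.1)) - n * ε)}

lemma neg_le_waitLogTerm_of_notMem_waitBadSet [Fintype 𝒜] {Q : Measure (ℕ → 𝒜)} {n : ℕ}
    (hn : 1 ≤ n) {ε : ℝ} {x y : ℕ → 𝒜} (h : (x, y) ∉ waitBadSet Q n ε) :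
    ((-ε : ℝ) : EReal) ≤ waitLogTerm Q n x y := by
  unfold waitLogTerm
  split_ifs with htop
  · exact le_top
  obtain ⟨k, hk⟩ := WithTop.ne_top_iff_exists.mp htop
  have hlt : Real.exp (-Real.log (marg Q n (pref n x)) - n * ε) < k :=
    lt_of_not_ge fun hle => h ⟨k, hk.symm, hle⟩
  have hlog := (Real.lt_log_iff_exp_lt ((Real.exp_pos _).trans hlt)).mpr hlt
  rw [← hk, WithTop.untopD_coe, EReal.coe_le_coe_iff, le_div_iff₀ (by exact_mod_cast hn)]
  linarith

variable [MeasurableSingletonClass 𝒜] [Fintype 𝒜] (P : Measure (ℕ → 𝒜)) [IsProbabilityMeasure P]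
  {Q : Measure (ℕ → 𝒜)} [IsProbabilityMeasure Q]

lemma measure_waitBadSet_le (hQ : ShiftInv Q) (n : ℕ) (ε : ℝ) :
    (P.prod Q) (waitBadSet Q n ε) ≤ ENNReal.ofReal (Real.exp (-(n * ε))) :=
  measure_prod_waitT_le P hQ _ fun _ => natFloor_exp_neg_log_sub_mul_le (measure_ne_top Q _) _

lemma tsum_measure_waitBadSet_ne_top (hQ : ShiftInv Q) {ε : ℝ} (hε : 0 < ε) :
    ∑' n, (P.prod Q) (waitBadSet Q n ε) ≠ ∞ := by
  refine ne_top_of_le_ne_top ?_ (ENNReal.tsum_le_tsum (measure_waitBadSet_le P hQ · ε))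
  rw [← ENNReal.ofReal_tsum_of_nonneg (fun _ => (Real.exp_pos _).le) (summable_exp_neg_nat_mul hε)]
  exact ENNReal.ofReal_ne_top

lemma ae_eventually_neg_le_waitLogTerm (hQ : ShiftInv Q) {ε : ℝ} (hε : 0 < ε) :
    ∀ᵐ p ∂(P.prod Q), ∀ᶠ n in atTop, ((-ε : ℝ) : EReal) ≤ waitLogTerm Q n p.1 p.2 := by
  filter_upwards [ae_eventually_notMem (tsum_measure_waitBadSet_ne_top P hQ hε)] with p hp
  filter_upwards [hp, eventually_ge_atTop 1] with n hn hn1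
  exact neg_le_waitLogTerm_of_notMem_waitBadSet hn1 hn

end WaitingTime

theorem waiting_time_lower_estimate_general [Fintype 𝒜] [MeasurableSpace 𝒜]
    [MeasurableSingletonClass 𝒜]
    (P Q : Measure (ℕ → 𝒜)) [IsProbabilityMeasure P] [IsProbabilityMeasure Q]
    (hQ : ShiftInv Q) :
    (∀ ε : ℝ, 0 < ε → ∀ n : ℕ,
      ((P.prod Q) {p : (ℕ → 𝒜) × (ℕ → 𝒜) |
          ∃ k : ℕ, waitT n p.1 p.2 = (k : ℕ∞) ∧
            (k : ℝ) ≤ Real.exp (-Real.log (marg Q n (pref n p.1)) - n * ε)}).toReal ≤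
        Real.exp (-(n * ε))) ∧
    (∀ ε : ℝ, 0 < ε →
      Summable (fun n : ℕ =>
        ((P.prod Q) {p : (ℕ → 𝒜) × (ℕ → 𝒜) |
          ∃ k : ℕ, waitT n p.1 p.2 = (k : ℕ∞) ∧
            (k : ℝ) ≤ Real.exp (-Real.log (marg Q n (pref n p.1)) - n * ε)}).toReal)) ∧
    (∀ᵐ p ∂(P.prod Q),
      0 ≤ Filter.liminf (fun n : ℕ => waitLogTerm Q n p.1 p.2) atTop) := by
  refine ⟨fun ε _ n => ENNReal.toReal_le_of_le_ofReal (Real.exp_pos _).le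
      (measure_waitBadSet_le P hQ n ε),
    fun ε hε => ENNReal.summable_toReal (tsum_measure_waitBadSet_ne_top P hQ hε), ?_⟩
  have hpos : ∀ m : ℕ, (0 : ℝ) < 1 / (m + 1) := fun m => by positivity
  filter_upwards [ae_all_iff.mpr fun m => ae_eventually_neg_le_waitLogTerm P hQ (hpos m)]
    with p hp
  exact zero_le_liminf_of_eventually_neg_le tendsto_one_div_add_atTop_nhds_zero_nat hp

/-- With `𝓑ₙ,ε := {(x,y) : Wₙ(x,y) ≤ exp(−log ℚₙ(x₁ⁿ) − nε)}`:
`(ℙ×ℚ)(𝓑ₙ,ε) ≤ e^{−nε}`, hence `∑ₙ (ℙ×ℚ)(𝓑ₙ,ε) < ∞`, and consequently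
`liminf (1/n)(log Wₙ(x,y) + log ℚₙ(x₁ⁿ)) ≥ 0` for `(ℙ×ℚ)`-a.e. `(x,y)`.
No mixing assumption on `ℙ` or `ℚ` is needed. -/
theorem waiting_time_lower_estimate [Fintype 𝒜] [MeasurableSpace 𝒜]
    [MeasurableSingletonClass 𝒜]
    (P Q : Measure (ℕ → 𝒜)) [IsProbabilityMeasure P] [IsProbabilityMeasure Q]
    (hP : ShiftInv P) (hQ : ShiftInv Q) :
    (∀ ε : ℝ, 0 < ε → ∀ n : ℕ,
      ((P.prod Q) {p : (ℕ → 𝒜) × (ℕ → 𝒜) |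
          ∃ k : ℕ, waitT n p.1 p.2 = (k : ℕ∞) ∧
            (k : ℝ) ≤ Real.exp (-Real.log (marg Q n (pref n p.1)) - n * ε)}).toReal ≤
        Real.exp (-(n * ε))) ∧
    (∀ ε : ℝ, 0 < ε →
      Summable (fun n : ℕ =>
        ((P.prod Q) {p : (ℕ → 𝒜) × (ℕ → 𝒜) |
          ∃ k : ℕ, waitT n p.1 p.2 = (k : ℕ∞) ∧
            (k : ℝ) ≤ Real.exp (-Real.log (marg Q n (pref n p.1)) - n * ε)}).toReal)) ∧
    (∀ᵐ p ∂(P.prod Q),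
      0 ≤ Filter.liminf (fun n : ℕ => waitLogTerm Q n p.1 p.2) atTop) :=
  waiting_time_lower_estimate_general P Q hQ
end
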